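/- arXiv:math/0001187 — 2 statements merged into one kernel-verified Lean document; each statement's English description precedes it below -/
import Mathlib

section
/- For all n ≥ 0 and all p, the q-binomial probabilities sum to one: ∑_{κ=0}^{n} [n choose κ]_q · p^κ · ∏_{i=0}^{n-κ-1}(1 - p q^i) = 1. -/
/-- The `q`-analog `[n]_q = 1 + q + ⋯ + q^(n-1) = (q^n - 1)/(q - 1)` of a natural number. -/
def qNum {R : Type*} [CommRing R] (q : R) (n : ℕ) : R := ∑ i ∈ Finset.range n, q ^ i

/-- The `q`-factorial `[n]! = [1][2]⋯[n]`. -/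
def qFact {R : Type*} [CommRing R] (q : R) (n : ℕ) : R := ∏ i ∈ Finset.range n, qNum q (i + 1)

/-- The Gaussian (`q`-)binomial coefficient, via the `q`-Pascal recursion. -/
def qBinom {R : Type*} [CommRing R] (q : R) : ℕ → ℕ → R
  | _, 0 => 1
  | 0, _ + 1 => 0
  | n + 1, k + 1 => qBinom q n k + q ^ (k + 1) * qBinom q n (k + 1)

/-- The `q`-shifted product `(1 −· p)^m = ∏_{i=0}^{m-1} (1 - p q^i)`. -/
def qProdSub {R : Type*} [CommRing R] (q p : R) (m : ℕ) : R :=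
  ∏ i ∈ Finset.range m, (1 - p * q ^ i)

/-
Splitting `[n+1 choose k+1]_q` by the `q`-Pascal rule and peeling the factor `1 - p` off
`(1 −· p)^(m+1) = (1 - p)(1 −· pq)^m` gives the recursion `S_{n+1}(p) = p S_n(p) + (1 - p) S_n(pq)`
for the sums `S_n(p)` in question, so `S_n ≡ 1` follows by induction on `n`, for all `p` at once.
-/

open Finset

section

variable {R : Type*} [CommRing R] (q : R)

theorem qBinom_zero_right (n : ℕ) : qBinom q n 0 = 1 := by
  cases n <;> rfl

theorem qBinom_succ_succ (n k : ℕ) :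
    qBinom q (n + 1) (k + 1) = qBinom q n k + q ^ (k + 1) * qBinom q n (k + 1) :=
  rfl

theorem qBinom_eq_zero_of_lt {n k : ℕ} (h : n < k) : qBinom q n k = 0 := by
  induction n generalizing k with
  | zero => obtain ⟨k, rfl⟩ := Nat.exists_eq_add_one_of_ne_zero h.ne'; rfl
  | succ n ih =>
    obtain ⟨k, rfl⟩ := Nat.exists_eq_add_one_of_ne_zero (by omega : k ≠ 0)
    rw [qBinom_succ_succ, ih (by omega), ih (by omega), mul_zero, add_zero]

theorem qProdSub_zero (p : R) : qProdSub q p 0 = 1 :=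
  prod_range_zero _

theorem qProdSub_succ (p : R) (m : ℕ) :
    qProdSub q p (m + 1) = (1 - p) * qProdSub q (p * q) m := by
  simp only [qProdSub, prod_range_succ', pow_zero, mul_one, pow_succ, mul_assoc, mul_comm q]
  exact mul_comm _ _

def qBernoulliSum (p : R) (n : ℕ) : R :=
  ∑ κ ∈ range (n + 1), qBinom q n κ * p ^ κ * qProdSub q p (n - κ)

theorem q_pow_mul_qBinom_mul_qProdSub (p : R) (n k : ℕ) :
    q ^ (k + 1) * qBinom q n (k + 1) * p ^ (k + 1) * qProdSub q p (n - k) =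
      (1 - p) * (qBinom q n (k + 1) * (p * q) ^ (k + 1) * qProdSub q (p * q) (n - (k + 1))) := by
  rcases lt_or_ge k n with hk | hk
  · rw [show n - k = n - (k + 1) + 1 by omega, qProdSub_succ]
    ring
  · simp [qBinom_eq_zero_of_lt q (Nat.lt_succ_of_le hk)]

theorem qBernoulliSum_succ (p : R) (n : ℕ) :
    qBernoulliSum q p (n + 1) = p * qBernoulliSum q p n + (1 - p) * qBernoulliSum q (p * q) n := by
  have pascal : ∀ k ∈ range (n + 1),
      qBinom q (n + 1) (k + 1) * p ^ (k + 1) * qProdSub q p (n + 1 - (k + 1)) =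
        p * (qBinom q n k * p ^ k * qProdSub q p (n - k)) +
          (1 - p) * (qBinom q n (k + 1) * (p * q) ^ (k + 1) *
            qProdSub q (p * q) (n - (k + 1))) := by
    intro k _
    rw [Nat.add_sub_add_right, ← q_pow_mul_qBinom_mul_qProdSub, qBinom_succ_succ]
    ring
  have shifted : qBernoulliSum q (p * q) n =
      ∑ k ∈ range (n + 1), qBinom q n (k + 1) * (p * q) ^ (k + 1) *
          qProdSub q (p * q) (n - (k + 1)) + qProdSub q (p * q) n := by
    rw [qBernoulliSum, sum_range_succ', qBinom_zero_right, pow_zero, one_mul, one_mul,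
      Nat.sub_zero, sum_range_succ _ n, qBinom_eq_zero_of_lt q (Nat.lt_succ_self n), zero_mul,
      zero_mul, add_zero]
  rw [qBernoulliSum, sum_range_succ', sum_congr rfl pascal, sum_add_distrib, ← mul_sum, ← mul_sum,
    qBinom_zero_right, Nat.sub_zero, qProdSub_succ, shifted, qBernoulliSum]
  ring

end

/-- The q-binomial probabilities sum to one:
`∑_{κ=0}^{n} [n choose κ]_q p^κ (1 −· p)^{n-κ} = 1`. -/
theorem qBernoulli_sum_eq_one {R : Type*} [CommRing R] (q p : R) (n : ℕ) :
    ∑ κ ∈ Finset.range (n + 1), qBinom q n κ * p ^ κ * qProdSub q p (n - κ) = 1 := by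
  change qBernoulliSum q p n = 1
  induction n generalizing p with
  | zero => simp [qBernoulliSum, qBinom_zero_right, qProdSub_zero]
  | succ n ih => rw [qBernoulliSum_succ, ih, ih]; ring
end

section
/- ∑ over compositions a(0)+⋯+a(κ) = n−κ of q^{∑_{s=0}^{κ}(m−s)a(s)} = q^{(m−κ)(n−κ)} [n choose κ]_q, for all 0 ≤ κ ≤ n and any integer m. -/
/-- The `q`-shifted power `(x +· y)^m = ∏_{i=0}^{m-1} (x + q^i y)`. -/
def qProdAdd {R : Type*} [CommRing R] (q x y : R) (m : ℕ) : R :=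
  ∏ i ∈ Finset.range m, (x + q ^ i * y)
theorem sum_adt_succ {M : Type*} [AddCommMonoid M] (k n : ℕ) (f : (Fin (k+1) → ℕ) → M) :
    ∑ a ∈ Finset.Nat.antidiagonalTuple (k+1) n, f a =
      ∑ p ∈ Finset.HasAntidiagonal.antidiagonal n, ∑ a ∈ Finset.Nat.antidiagonalTuple k p.2, f (Fin.cons p.1 a) := by
  rw [Finset.sum_sigma']
  apply Finset.sum_nbij' (i := fun a => (⟨(a 0, ∑ s : Fin k, a s.succ), Fin.tail a⟩ :
      Σ _p : ℕ × ℕ, Fin k → ℕ)) (j := fun x => Fin.cons x.1.1 x.2)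
  · intro a ha
    simp only [Finset.Nat.mem_antidiagonalTuple] at ha
    simp only [Finset.mem_sigma, Finset.HasAntidiagonal.mem_antidiagonal, Finset.Nat.mem_antidiagonalTuple]
    constructor
    · rw [← ha, Fin.sum_univ_succ]
    · rfl
  · intro x hx
    simp only [Finset.mem_sigma, Finset.HasAntidiagonal.mem_antidiagonal] at hx
    have h2 := hx.2; rw [Finset.Nat.mem_antidiagonalTuple] at h2
    simp only [Finset.Nat.mem_antidiagonalTuple, Fin.sum_cons, h2, hx.1]
  · intro a _; exact Fin.cons_self_tail a
  · intro x hx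
    simp only [Finset.mem_sigma, Finset.HasAntidiagonal.mem_antidiagonal] at hx
    ext : 1
    · simp only [Fin.cons_zero]
      have : ∑ s : Fin k, Fin.cons (α := fun _ => ℕ) x.1.1 x.2 s.succ = x.1.2 := by
        simp only [Fin.cons_succ]
        have := hx.2; rw [Finset.Nat.mem_antidiagonalTuple] at this; exact this
      rw [this]
    · simp [Fin.tail_cons]
  · intro a _
    rw [show Fin.cons ((⟨(a 0, ∑ s : Fin k, a s.succ), Fin.tail a⟩ :
      Σ _p : ℕ × ℕ, Fin k → ℕ)).1.1 (⟨(a 0, ∑ s : Fin k, a s.succ), Fin.tail a⟩ :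
      Σ _p : ℕ × ℕ, Fin k → ℕ).2 = Fin.cons (a 0) (Fin.tail a) from rfl, Fin.cons_self_tail]

theorem qBinom_of_lt {R : Type*} [CommRing R] (q : R) : ∀ n k, n < k → qBinom q n k = 0
  | _, 0, h => absurd h (Nat.not_lt_zero _)
  | 0, _ + 1, _ => rfl
  | n + 1, k + 1, h => by
    rw [qBinom, qBinom_of_lt q n k (Nat.lt_of_succ_lt_succ h),
      qBinom_of_lt q n (k + 1) (Nat.lt_of_succ_lt h), mul_zero, add_zero]

theorem qBinom_self {R : Type*} [CommRing R] (q : R) : ∀ n, qBinom q n n = 1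
  | 0 => rfl
  | n + 1 => by
    rw [qBinom, qBinom_self q n, qBinom_of_lt q n (n + 1) (Nat.lt_succ_self n), mul_zero, add_zero]

theorem qBinom_iter {R : Type*} [CommRing R] (q : R) (k : ℕ) : ∀ N,
    qBinom q (N + k + 1) (k + 1) =
      ∑ i ∈ Finset.range (N + 1), q ^ ((k + 1) * i) * qBinom q (N - i + k) k
  | 0 => by
    rw [Finset.sum_range_one]
    simp [qBinom, qBinom_self, qBinom_of_lt q k (k + 1) (Nat.lt_succ_self k)]
  | N + 1 => by
    rw [Finset.sum_range_succ' (fun i => q ^ ((k + 1) * i) * qBinom q (N + 1 - i + k) k) (N + 1),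
      show N + 1 + k + 1 = (N + k + 1) + 1 from by ring, qBinom, qBinom_iter q k N]
    simp only [mul_zero, pow_zero, one_mul, Nat.sub_zero]
    rw [show N + 1 + k = N + k + 1 from by ring, add_comm (qBinom q (N + k + 1) k),
      Finset.mul_sum]
    congr 1
    apply Finset.sum_congr rfl
    intro i _
    rw [show N + 1 - (i + 1) = N - i from by omega,
      show (k + 1) * (i + 1) = (k + 1) * i + (k + 1) from by ring, pow_add]
    ring

theorem S_eq {R : Type*} [CommRing R] (q : R) : ∀ (k N : ℕ),
    ∑ a ∈ Finset.Nat.antidiagonalTuple (k + 1) N,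
      q ^ (∑ s : Fin (k + 1), (k - (s : ℕ)) * a s) = qBinom q (N + k) k
  | 0, N => by
    rw [Finset.Nat.antidiagonalTuple_one, Finset.sum_singleton]
    simp [qBinom]
  | k + 1, N => by
    rw [sum_adt_succ]
    have : ∀ p ∈ Finset.HasAntidiagonal.antidiagonal N,
        (∑ a ∈ Finset.Nat.antidiagonalTuple (k + 1) p.2,
          q ^ (∑ s : Fin (k + 2), (k + 1 - (s : ℕ)) * Fin.cons (α := fun _ => ℕ) p.1 a s)) =
        q ^ ((k + 1) * p.1) * qBinom q (p.2 + k) k := by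
      intro p hp
      rw [← S_eq q k p.2, Finset.mul_sum]
      apply Finset.sum_congr rfl
      intro a _
      rw [← pow_add]
      congr 1
      rw [Fin.sum_univ_succ]
      simp only [Fin.cons_zero, Fin.cons_succ, Fin.val_zero, Nat.sub_zero, Fin.val_succ]
      congr 1
      apply Finset.sum_congr rfl
      intro s _
      congr 1
      omega
    rw [Finset.sum_congr rfl this, Finset.Nat.sum_antidiagonal_eq_sum_range_succ_mk,
      show N + (k + 1) = N + k + 1 from rfl, qBinom_iter q k N]


/-- Identity (5.11): for `0 ≤ κ ≤ n` and any integer `m`,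
`∑_{a(0)+⋯+a(κ)=n-κ} q^{∑ (m-s)a(s)} = q^{(m-κ)(n-κ)} [n choose κ]_q`. -/
theorem qCounting_shifted {F : Type*} [Field F] (q : F) (hq : q ≠ 0) (m : ℤ)
    (n κ : ℕ) (hκ : κ ≤ n) :
    ∑ a ∈ Finset.Nat.antidiagonalTuple (κ + 1) (n - κ),
        q ^ (∑ s : Fin (κ + 1), (m - (s : ℕ)) * (a s : ℤ)) =
      q ^ ((m - κ) * ((n : ℤ) - κ)) * qBinom q n κ := by
  have hn : (n : ℤ) - κ = ((n - κ : ℕ) : ℤ) := by omega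
  have key : ∀ a ∈ Finset.Nat.antidiagonalTuple (κ + 1) (n - κ),
      q ^ (∑ s : Fin (κ + 1), (m - (s : ℕ)) * (a s : ℤ)) =
        q ^ ((m - κ) * ((n : ℤ) - κ)) * q ^ (∑ s : Fin (κ + 1), (κ - (s : ℕ)) * a s) := by
    intro a ha
    rw [Finset.Nat.mem_antidiagonalTuple] at ha
    rw [← zpow_natCast q (∑ s : Fin (κ + 1), (κ - (s : ℕ)) * a s), ← zpow_add₀ hq]
    congr 1
    push_cast
    have h1 : ∀ s : Fin (κ + 1), ((κ - (s : ℕ) : ℕ) : ℤ) = (κ : ℤ) - (s : ℕ) := by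
      intro s; have := s.isLt; omega
    calc ∑ s : Fin (κ + 1), (m - (s : ℕ)) * (a s : ℤ)
        = ∑ s : Fin (κ + 1), ((m - κ) * (a s : ℤ) + ((κ : ℤ) - (s : ℕ)) * a s) := by
          apply Finset.sum_congr rfl; intro s _; ring
      _ = (m - κ) * ((n : ℤ) - κ) + ∑ s : Fin (κ + 1), ((κ : ℤ) - (s : ℕ)) * a s := by
          rw [Finset.sum_add_distrib, ← Finset.mul_sum, hn, ← Nat.cast_sum, ha]
      _ = _ := by
          congr 1
          apply Finset.sum_congr rfl; intro s _; rw [h1]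
  rw [Finset.sum_congr rfl key, ← Finset.mul_sum, S_eq q κ (n - κ),
    Nat.sub_add_cancel hκ]
end
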